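/- The set of factors of length 2 of the sequence w, i.e., the set of all two-letter words w[n]w[n+1] for n ≥ 0, is exactly {01, 66, 12, 31, 23, 34, 26, 45, 62, 47, 84, 78, 54, 41}. -/
import Mathlib


/-- The action of a morphism (given by its values on letters) on finite words. -/
def applyMorphism {α β : Type*} (φ : α → List β) (l : List α) : List β :=
  l.flatMap φ

/-- The prefix `u[:n]` of length `n` of an infinite word `u`. -/
def pref {α : Type*} (u : ℕ → α) (n : ℕ) : List α :=
  (List.range n).map u

/-- A finite word `l` is a prefix of the infinite word `u`. -/
def PrefixOfSeq {α : Type*} (l : List α) (u : ℕ → α) : Prop :=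
  ∀ i : ℕ, ∀ h : i < l.length, l.get ⟨i, h⟩ = u i

/-- The infinite word `u` is a (one-sided) fixed point of the substitution `φ`,
i.e. `φ(u) = u`: the image of every prefix of `u` is again a prefix of `u`. -/
def IsFixedPointOf {α : Type*} (φ : α → List α) (u : ℕ → α) : Prop :=
  ∀ n : ℕ, PrefixOfSeq (applyMorphism φ (pref u n)) u

/-- The substitution `μ` over `C = {0, 1, …, 8}`. -/
def mu : Fin 9 → List (Fin 9)
  | 0 => [0, 1]
  | 1 => [2, 3]
  | 2 => [4, 5]
  | 3 => [4, 1]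
  | 4 => [2, 3, 1]
  | 5 => [2, 6]
  | 6 => [4, 7, 8]
  | 7 => [2]
  | 8 => [6, 6]

lemma pref_eq_of_prefix {w : ℕ → Fin 9} {l : List (Fin 9)} (h : PrefixOfSeq l w) :
    pref w l.length = l := by
  apply List.ext_get (by simp [pref])
  intro i h1 h2
  simp only [pref, List.get_eq_getElem, List.getElem_map, List.getElem_range]
  exact (h i h2).symm

lemma stepPrefix {w : ℕ → Fin 9} (hfixw : IsFixedPointOf mu w) {l : List (Fin 9)}
    (h : PrefixOfSeq l w) : PrefixOfSeq (applyMorphism mu l) w := by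
  have := hfixw l.length
  rwa [pref_eq_of_prefix h] at this

lemma val_of_prefix {w : ℕ → Fin 9} {l : List (Fin 9)} (h : PrefixOfSeq l w)
    (i : ℕ) (hi : i < l.length) : w i = l.get ⟨i, hi⟩ := (h i hi).symm

/-- length of image of prefix of length n -/
def Lh (w : ℕ → Fin 9) (n : ℕ) : ℕ := (applyMorphism mu (pref w n)).length

lemma Lh_zero (w : ℕ → Fin 9) : Lh w 0 = 0 := rfl

lemma Lh_succ (w : ℕ → Fin 9) (n : ℕ) :
    Lh w (n + 1) = Lh w n + (mu (w n)).length := by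
  unfold Lh
  have hp : pref w (n+1) = pref w n ++ [w n] := by
    simp [pref, List.range_succ]
  rw [hp]
  simp [applyMorphism]

lemma mu_len_pos : ∀ c : Fin 9, 0 < (mu c).length := by decide

lemma key {w : ℕ → Fin 9} (hfixw : IsFixedPointOf mu w) (n j : ℕ)
    (hj : j < (mu (w n)).length) :
    w (Lh w n + j) = (mu (w n)).get ⟨j, hj⟩ := by
  have hp : pref w (n+1) = pref w n ++ [w n] := by
    simp [pref, List.range_succ]
  have happ : applyMorphism mu (pref w (n+1)) =
      applyMorphism mu (pref w n) ++ mu (w n) := by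
    rw [hp]; simp [applyMorphism]
  have hlen : Lh w n + j < (applyMorphism mu (pref w (n+1))).length := by
    rw [happ, List.length_append]
    exact Nat.add_lt_add_left hj _
  have h2 := hfixw (n+1) (Lh w n + j) hlen
  rw [← h2]
  simp only [List.get_eq_getElem]
  rw [List.getElem_of_eq happ]
  rw [List.getElem_append_right (by exact Nat.le_add_right _ _)]
  simp only [show (applyMorphism mu (pref w n)).length = Lh w n from rfl,
    Nat.add_sub_cancel_left]

lemma Lh_lt_succ (w : ℕ → Fin 9) (n : ℕ) : Lh w n < Lh w (n + 1) := by
  rw [Lh_succ]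
  exact Nat.lt_add_of_pos_right (mu_len_pos _)

lemma exists_block (w : ℕ → Fin 9) (m : ℕ) :
    ∃ n, Lh w n ≤ m ∧ m < Lh w (n + 1) := by
  induction m with
  | zero => exact ⟨0, Nat.le_refl 0, Lh_lt_succ w 0⟩
  | succ m ih =>
    obtain ⟨n, h1, h2⟩ := ih
    by_cases hc : m + 1 < Lh w (n + 1)
    · exact ⟨n, by omega, hc⟩
    · refine ⟨n + 1, by omega, ?_⟩
      have := Lh_lt_succ w (n + 1)
      omega

lemma Lh_lb (w : ℕ → Fin 9) (hw0 : w 0 = 0) (n : ℕ) (hn : 1 ≤ n) :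
    n + 1 ≤ Lh w n := by
  induction n with
  | zero => omega
  | succ n ih =>
    rw [Lh_succ]
    rcases Nat.eq_or_lt_of_le hn with h | h
    · obtain rfl : n = 0 := by omega
      rw [Lh_zero, hw0]
      decide
    · have := ih (by omega)
      have := mu_len_pos (w n)
      omega

def pairOK (a b : Fin 9) : Prop :=
  (a, b) ∈ [((0:Fin 9), (1:Fin 9)), (6,6), (1,2), (3,1), (2,3), (3,4), (2,6),
    (4,5), (6,2), (4,7), (8,4), (7,8), (5,4), (4,1)]

instance (a b : Fin 9) : Decidable (pairOK a b) := by unfold pairOK; infer_instance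

lemma mu_len_le : ∀ c : Fin 9, (mu c).length ≤ 3 := by decide

lemma muInterior : ∀ c : Fin 9, ∀ j : Fin 3, j.1 + 1 < (mu c).length →
    pairOK ((mu c).getD j.1 0) ((mu c).getD (j.1 + 1) 0) := by decide

lemma boundary : ∀ a b : Fin 9, pairOK a b →
    pairOK ((mu a).getD ((mu a).length - 1) 0) ((mu b).getD 0 0) := by decide

lemma claim {w : ℕ → Fin 9} (hw0 : w 0 = 0) (hfixw : IsFixedPointOf mu w)
    (hw1 : w 1 = 1) (hw2 : w 2 = 2) : ∀ m, pairOK (w m) (w (m + 1)) := by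
  intro m
  induction m using Nat.strong_induction_on with
  | _ m IH =>
    rcases Nat.lt_or_ge m 2 with hm2 | hm2
    · interval_cases m
      · rw [hw0, hw1]; decide
      · rw [hw1, hw2]; decide
    · obtain ⟨n, h1, h2⟩ := exists_block w m
      have hLs := Lh_succ w n
      have hle3 := mu_len_le (w n)
      have hn1 : 1 ≤ n := by
        by_contra h
        obtain rfl : n = 0 := by omega
        rw [Lh_zero, hw0] at hLs
        simp only [mu, List.length_cons, List.length_nil] at hLs
        omega
      obtain ⟨j, hm⟩ : ∃ j, m = Lh w n + j := ⟨m - Lh w n, by omega⟩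
      have hj : j < (mu (w n)).length := by omega
      have e1 : w m = (mu (w n)).getD j 0 := by
        rw [hm, key hfixw n j hj, List.get_eq_getElem, List.getD_eq_getElem]
      by_cases hc : j + 1 < (mu (w n)).length
      · have e2 : w (m + 1) = (mu (w n)).getD (j + 1) 0 := by
          have hh : m + 1 = Lh w n + (j + 1) := by omega
          rw [hh, key hfixw n (j + 1) hc, List.get_eq_getElem, List.getD_eq_getElem]
        rw [e1, e2]
        exact muInterior (w n) ⟨j, by omega⟩ hc
      · have hj1 : j = (mu (w n)).length - 1 := by omega
        have e2 : w (m + 1) = (mu (w (n + 1))).getD 0 0 := by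
          have hh : m + 1 = Lh w (n + 1) + 0 := by omega
          rw [hh, key hfixw (n + 1) 0 (mu_len_pos _), List.get_eq_getElem,
            List.getD_eq_getElem]
        have hnm : n < m := by
          have := Lh_lb w hw0 n hn1
          omega
        rw [e1, e2, hj1]
        exact boundary _ _ (IH n hnm)

/-- The set of factors of length 2 of the fixed point `w` of `μ` is exactly
`{01, 66, 12, 31, 23, 34, 26, 45, 62, 47, 84, 78, 54, 41}`. -/
theorem factors_of_length_two
    (w : ℕ → Fin 9)
    (hw0 : w 0 = 0) (hfixw : IsFixedPointOf mu w) :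
    {l : List (Fin 9) | ∃ n : ℕ, l = [w n, w (n + 1)]} =
      {[0, 1], [6, 6], [1, 2], [3, 1], [2, 3], [3, 4], [2, 6],
        [4, 5], [6, 2], [4, 7], [8, 4], [7, 8], [5, 4], [4, 1]} := by
  have p0 : PrefixOfSeq [(0 : Fin 9)] w := by
    intro i hi
    simp only [List.length_singleton] at hi
    interval_cases i
    simpa using hw0.symm
  have p1 := stepPrefix hfixw p0
  have p2 := stepPrefix hfixw p1
  have p3 := stepPrefix hfixw p2
  have p4 := stepPrefix hfixw p3
  have p5 := stepPrefix hfixw p4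
  have p6 := stepPrefix hfixw p5
  have hv : ∀ i : ℕ, ∀ v : Fin 9, ∀ hi : i < (applyMorphism mu (applyMorphism mu
      (applyMorphism mu (applyMorphism mu (applyMorphism mu (applyMorphism mu
      [(0 : Fin 9)])))))).length,
      (applyMorphism mu (applyMorphism mu (applyMorphism mu (applyMorphism mu
        (applyMorphism mu (applyMorphism mu [(0 : Fin 9)])))))).get ⟨i, hi⟩ = v →
      w i = v := by
    intro i v hi h
    rw [val_of_prefix p6 i hi, h]
  have h0 : w 0 = 0 := hw0
  have h1 : w 1 = 1 := hv 1 1 (by decide) (by decide)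
  have h2 : w 2 = 2 := hv 2 2 (by decide) (by decide)
  have h3 : w 3 = 3 := hv 3 3 (by decide) (by decide)
  have h4 : w 4 = 4 := hv 4 4 (by decide) (by decide)
  have h5 : w 5 = 5 := hv 5 5 (by decide) (by decide)
  have h6 : w 6 = 4 := hv 6 4 (by decide) (by decide)
  have h7 : w 7 = 1 := hv 7 1 (by decide) (by decide)
  have h9 : w 9 = 3 := hv 9 3 (by decide) (by decide)
  have h10 : w 10 = 1 := hv 10 1 (by decide) (by decide)
  have h11 : w 11 = 2 := hv 11 2 (by decide) (by decide)
  have h12 : w 12 = 6 := hv 12 6 (by decide) (by decide)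
  have h13 : w 13 = 2 := hv 13 2 (by decide) (by decide)
  have h26 : w 26 = 4 := hv 26 4 (by decide) (by decide)
  have h27 : w 27 = 7 := hv 27 7 (by decide) (by decide)
  have h28 : w 28 = 8 := hv 28 8 (by decide) (by decide)
  have h29 : w 29 = 4 := hv 29 4 (by decide) (by decide)
  have h62 : w 62 = 6 := hv 62 6 (by decide) (by decide)
  have h63 : w 63 = 6 := hv 63 6 (by decide) (by decide)
  have hcl := claim hw0 hfixw h1 h2
  ext l
  simp only [Set.mem_setOf_eq, Set.mem_insert_iff, Set.mem_singleton_iff]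
  constructor
  · rintro ⟨n, rfl⟩
    have h := hcl n
    revert h
    generalize w n = a
    generalize w (n + 1) = b
    fin_cases a <;> fin_cases b <;> decide
  · rintro (rfl | rfl | rfl | rfl | rfl | rfl | rfl | rfl | rfl | rfl | rfl | rfl | rfl | rfl)
    · exact ⟨0, by rw [h0, h1]⟩
    · exact ⟨62, by rw [h62, h63]⟩
    · exact ⟨1, by rw [h1, h2]⟩
    · exact ⟨9, by rw [h9, h10]⟩
    · exact ⟨2, by rw [h2, h3]⟩
    · exact ⟨3, by rw [h3, h4]⟩
    · exact ⟨11, by rw [h11, h12]⟩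
    · exact ⟨4, by rw [h4, h5]⟩
    · exact ⟨12, by rw [h12, h13]⟩
    · exact ⟨26, by rw [h26, h27]⟩
    · exact ⟨28, by rw [h28, h29]⟩
    · exact ⟨27, by rw [h27, h28]⟩
    · exact ⟨5, by rw [h5, h6]⟩
    · exact ⟨6, by rw [h6, h7]⟩
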